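/- arXiv:2201.04291 — 8 statements merged into one kernel-verified Lean document; each statement's English description precedes it below -/
import Mathlib

section
/- (Dedekind reciprocity) Let h and k be coprime positive integers. Then s(h,k) + s(k,h) = (h² + k² + 1)/(12hk) - 1/4. -/
/-!
For `1 ≤ m ≤ k - 1` write `h m = k q_m + r_m`. Coprimality makes `m ↦ r_m` a permutation of
`{1, …, k - 1}`, so `s(h,k)` reduces to the moment `A(h,k) = ∑ m q_m`, and `∑ r_m² = ∑ m²`
relates `A(h,k)` to `∑ q_m²`. Writing `q_m² = ∑_{s ≤ q_m} (2s - 1)` and counting the lattice points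
`(m, s)` with `k s < h m` by `s` instead of by `m` expresses `∑ q_m²` through `A(k,h)`. This yields
`12 (h A(h,k) + k A(k,h)) = (h - 1)(k - 1)(8hk - h - k - 1)`, which is the reciprocity law.
-/

/-- The sawtooth function ((x)). -/
def saw (x : ℚ) : ℚ := if x.den = 1 then 0 else x - ⌊x⌋ - 1/2

/-- The Dedekind sum s(h,k) = Σ_{m=1}^{k} ((hm/k))((m/k)). -/
noncomputable def dedekindSum (h k : ℤ) : ℚ :=
  ∑ m ∈ Finset.Icc (1 : ℤ) k, saw (h * m / k) * saw (m / k)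

open Finset

theorem two_mul_sum_Icc_id {n : ℤ} (hn : 0 ≤ n) : 2 * ∑ m ∈ Icc 1 n, m = n * (n + 1) := by
  induction n, hn using Int.leInduction with
  | base => rfl
  | succ n hn ih =>
    rw [← insert_Icc_right_eq_Icc_add_one (by omega), sum_insert (by simp), mul_add, ih]
    ring

theorem six_mul_sum_Icc_sq {n : ℤ} (hn : 0 ≤ n) :
    6 * ∑ m ∈ Icc 1 n, m ^ 2 = n * (n + 1) * (2 * n + 1) := by
  induction n, hn using Int.leInduction with
  | base => rfl
  | succ n hn ih =>
    rw [← insert_Icc_right_eq_Icc_add_one (by omega), sum_insert (by simp), mul_add, ih]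
    ring

theorem sum_Icc_two_mul_sub_one {n : ℤ} (hn : 0 ≤ n) : ∑ s ∈ Icc 1 n, (2 * s - 1) = n ^ 2 := by
  induction n, hn using Int.leInduction with
  | base => rfl
  | succ n hn ih =>
    rw [← insert_Icc_right_eq_Icc_add_one (by omega), sum_insert (by simp), ih]
    ring

section Coprime

variable {h k : ℤ}

theorem not_dvd_mul_of_mem_Icc {m : ℤ} (hc : IsCoprime h k) (hm : m ∈ Icc 1 (k - 1)) :
    ¬ k ∣ h * m := fun hd ↦ by
  rw [mem_Icc] at hm
  have := Int.le_of_dvd (by omega) (hc.symm.dvd_of_dvd_mul_left hd)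
  omega

theorem mul_emod_mem_Icc {m : ℤ} (hc : IsCoprime h k) (hm : m ∈ Icc 1 (k - 1)) :
    h * m % k ∈ Icc 1 (k - 1) := by
  have hne : h * m % k ≠ 0 := fun h0 ↦
    not_dvd_mul_of_mem_Icc hc hm (Int.dvd_of_emod_eq_zero h0)
  rw [mem_Icc] at hm ⊢
  have := Int.emod_nonneg (h * m) (by omega : k ≠ 0)
  have := Int.emod_lt_of_pos (h * m) (by omega : 0 < k)
  omega

theorem sum_Icc_comp_mul_emod {M : Type*} [AddCommMonoid M] (hc : IsCoprime h k) (f : ℤ → M) :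
    ∑ m ∈ Icc 1 (k - 1), f (h * m % k) = ∑ m ∈ Icc 1 (k - 1), f m := by
  obtain ⟨u, v, huv⟩ := hc
  have hu : IsCoprime u k := ⟨h, v, by linear_combination huv⟩
  have cancel {a b : ℤ} (hab : a * b + v * k = 1) {m : ℤ} (hm : m ∈ Icc 1 (k - 1)) :
      a * (b * m % k) % k = m := by
    rw [mem_Icc] at hm
    rw [Int.mul_emod, Int.emod_emod, ← Int.mul_emod,
      show a * (b * m) = m + k * (-(v * m)) by linear_combination m * hab,
      Int.add_mul_emod_self_left, Int.emod_eq_of_lt (by omega) (by omega)]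
  exact sum_nbij' (h * · % k) (u * · % k) (fun _ ↦ mul_emod_mem_Icc ⟨u, v, huv⟩)
    (fun _ ↦ mul_emod_mem_Icc hu) (fun _ ↦ cancel huv) (fun _ ↦ cancel (by linear_combination huv))
    (fun _ _ ↦ rfl)

theorem two_mul_sum_Icc_ediv (hc : IsCoprime h k) (hk : 0 < k) :
    2 * ∑ m ∈ Icc 1 (k - 1), h * m / k = (h - 1) * (k - 1) := by
  have hperm : ∑ m ∈ Icc 1 (k - 1), h * m % k = ∑ m ∈ Icc 1 (k - 1), m :=
    sum_Icc_comp_mul_emod hc id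
  have hlin : ∑ m ∈ Icc 1 (k - 1), h * m = h * ∑ m ∈ Icc 1 (k - 1), m := by rw [mul_sum]
  simp only [Int.emod_def, sum_sub_distrib, ← mul_sum, hlin] at hperm
  apply mul_left_cancel₀ hk.ne'
  linear_combination (h - 1) * two_mul_sum_Icc_id (by omega : 0 ≤ k - 1) - 2 * hperm

theorem mem_Icc_ediv_iff {m s : ℤ} (hc : IsCoprime h k) (hh : 0 < h) (hk : 0 < k) :
    m ∈ Icc 1 (k - 1) ∧ s ∈ Icc 1 (h * m / k) ↔
      m ∈ Icc (k * s / h + 1) (k - 1) ∧ s ∈ Icc 1 (h - 1) := by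
  simp only [mem_Icc, Int.le_ediv_iff_mul_le hk, Int.add_one_le_iff, Int.ediv_lt_iff_lt_mul hh]
  constructor
  · rintro ⟨hm, hs, hsm⟩
    have hne : s * k ≠ h * m := fun he ↦
      not_dvd_mul_of_mem_Icc hc (mem_Icc.mpr hm) ⟨s, by linarith⟩
    refine ⟨⟨by linarith [lt_of_le_of_ne hsm hne], hm.2⟩, hs, ?_⟩
    nlinarith
  · rintro ⟨⟨hsm, hm⟩, hs⟩
    exact ⟨⟨by nlinarith, hm⟩, hs.1, by linarith⟩

theorem sum_Icc_ediv_sq (hc : IsCoprime h k) (hh : 0 < h) (hk : 0 < k) :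
    ∑ m ∈ Icc 1 (k - 1), (h * m / k) ^ 2
      = ∑ s ∈ Icc 1 (h - 1), (2 * s - 1) * (k - 1 - k * s / h) := by
  calc ∑ m ∈ Icc 1 (k - 1), (h * m / k) ^ 2
      = ∑ m ∈ Icc 1 (k - 1), ∑ s ∈ Icc 1 (h * m / k), (2 * s - 1) := by
        refine sum_congr rfl fun m hm ↦ (sum_Icc_two_mul_sub_one ?_).symm
        exact Int.ediv_nonneg (by nlinarith [mem_Icc.mp hm]) hk.le
    _ = ∑ s ∈ Icc 1 (h - 1), ∑ m ∈ Icc (k * s / h + 1) (k - 1), (2 * s - 1) :=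
        sum_comm' fun _ _ ↦ mem_Icc_ediv_iff hc hh hk
    _ = ∑ s ∈ Icc 1 (h - 1), (2 * s - 1) * (k - 1 - k * s / h) := by
        refine sum_congr rfl fun s hs ↦ ?_
        have : k * s / h < k := (Int.ediv_lt_iff_lt_mul hh).mpr (by nlinarith [mem_Icc.mp hs])
        rw [sum_const, Int.card_Icc, nsmul_eq_mul, mul_comm]
        congr 1
        omega

noncomputable def floorMomentSum (h k : ℤ) : ℤ := ∑ m ∈ Icc 1 (k - 1), m * (h * m / k)

theorem floorMomentSum_reciprocity (hc : IsCoprime h k) (hh : 0 < h) (hk : 0 < k) :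
    12 * (h * floorMomentSum h k + k * floorMomentSum k h)
      = (h - 1) * (k - 1) * (8 * h * k - h - k - 1) := by
  have hsq : ∑ m ∈ Icc 1 (k - 1), (h * m % k) ^ 2 = ∑ m ∈ Icc 1 (k - 1), m ^ 2 :=
    sum_Icc_comp_mul_emod hc (· ^ 2)
  have hlat := sum_Icc_ediv_sq hc hh hk
  have hsq_expand (m : ℤ) : (h * m % k) ^ 2
      = h ^ 2 * m ^ 2 - 2 * h * k * (m * (h * m / k)) + k ^ 2 * (h * m / k) ^ 2 := by
    rw [Int.emod_def]; ring
  have hlat_expand (s : ℤ) : (2 * s - 1) * (k - 1 - k * s / h)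
      = (k - 1) * (2 * s - 1) - 2 * (s * (k * s / h)) + k * s / h := by
    ring
  simp only [hsq_expand, hlat_expand, sum_add_distrib, sum_sub_distrib, ← mul_sum,
    sum_Icc_two_mul_sub_one (by omega : 0 ≤ h - 1)] at hsq hlat
  rw [floorMomentSum, floorMomentSum]
  apply mul_left_cancel₀ hk.ne'
  linear_combination (-6) * hsq + 6 * k ^ 2 * hlat + 3 * k ^ 2 * two_mul_sum_Icc_ediv hc.symm hh
    + (h ^ 2 - 1) * six_mul_sum_Icc_sq (by omega : 0 ≤ k - 1)

end Coprime

theorem saw_intCast (n : ℤ) : saw n = 0 := by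
  simp [saw]

theorem saw_intCast_div {a b : ℤ} (hb : 0 < b) (hab : ¬ b ∣ a) :
    saw (a / b) = (a % b : ℤ) / b - 1 / 2 := by
  have hb' : (b : ℚ) ≠ 0 := by exact_mod_cast hb.ne'
  rw [saw, if_neg ((Rat.den_div_intCast_eq_one_iff a b hb.ne').not.mpr hab),
    Int.floor_div_cast_of_nonneg hb.le, Int.floor_intCast, Int.emod_def]
  push_cast
  field_simp

theorem four_mul_sq_mul_saw_mul_saw {h k m : ℤ} (hc : IsCoprime h k) (hm : m ∈ Icc 1 (k - 1)) :
    4 * (k : ℚ) ^ 2 * (saw (h * m / k) * saw (m / k))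
      = ((4 * h * m ^ 2 - 4 * k * (m * (h * m / k)) - 2 * k * (h * m % k + m) + k ^ 2 : ℤ) : ℚ) := by
  have hmk : ¬ k ∣ m := by simpa using not_dvd_mul_of_mem_Icc isCoprime_one_left hm
  rw [mem_Icc] at hm
  have hk : 0 < k := by omega
  have hk' : (k : ℚ) ≠ 0 := by exact_mod_cast hk.ne'
  rw [show (h : ℚ) * m = ((h * m : ℤ) : ℚ) by push_cast; ring,
    saw_intCast_div hk (not_dvd_mul_of_mem_Icc hc (mem_Icc.mpr hm)), saw_intCast_div hk hmk,
    Int.emod_eq_of_lt (by omega : 0 ≤ m) (by omega : m < k), Int.emod_def]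
  push_cast
  field_simp
  ring

theorem twelve_mul_dedekindSum {h k : ℤ} (hc : IsCoprime h k) (hk : 0 < k) :
    12 * (k : ℚ) * dedekindSum h k
      = 2 * h * (k - 1) * (2 * k - 1) - 12 * floorMomentSum h k - 3 * k * (k - 1) := by
  have hsum : 4 * (k : ℚ) ^ 2 * dedekindSum h k = ((∑ m ∈ Icc 1 (k - 1),
      (4 * h * m ^ 2 - 4 * k * (m * (h * m / k)) - 2 * k * (h * m % k + m) + k ^ 2) :
        ℤ) : ℚ) := by
    rw [dedekindSum, ← insert_Icc_sub_one_right_eq_Icc (by omega : (1 : ℤ) ≤ k),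
      sum_insert (by simp), mul_div_cancel_right₀ _ (by exact_mod_cast hk.ne'), saw_intCast,
      zero_mul, zero_add, mul_sum, Int.cast_sum]
    exact sum_congr rfl fun m hm ↦ four_mul_sq_mul_saw_mul_saw hc hm
  have hint : 3 * ∑ m ∈ Icc 1 (k - 1),
      (4 * h * m ^ 2 - 4 * k * (m * (h * m / k)) - 2 * k * (h * m % k + m) + k ^ 2)
      = k * (2 * h * (k - 1) * (2 * k - 1) - 12 * floorMomentSum h k - 3 * k * (k - 1)) := by
    have hcard : ((Icc (1 : ℤ) (k - 1)).card : ℤ) = k - 1 := by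
      rw [Int.card_Icc]; omega
    have hperm : ∑ m ∈ Icc 1 (k - 1), h * m % k = ∑ m ∈ Icc 1 (k - 1), m :=
      sum_Icc_comp_mul_emod hc id
    simp only [sum_add_distrib, sum_sub_distrib, ← mul_sum, sum_const, nsmul_eq_mul, hcard,
      floorMomentSum]
    linear_combination (-6 * k) * hperm + (-6 * k) * two_mul_sum_Icc_id (by omega : 0 ≤ k - 1)
      + 2 * h * six_mul_sum_Icc_sq (by omega : 0 ≤ k - 1)
  apply mul_left_cancel₀ (by exact_mod_cast hk.ne' : (k : ℚ) ≠ 0)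
  have hint' := congrArg (Int.cast : ℤ → ℚ) hint
  push_cast at hsum hint'
  linear_combination 3 * hsum + hint'

theorem dedekindSum_reciprocity (h k : ℤ) (hco : Int.gcd h k = 1) (hh : 0 < h) (hk : 0 < k) :
    dedekindSum h k + dedekindSum k h
      = ((h : ℚ)^2 + (k : ℚ)^2 + 1) / (12 * h * k) - 1/4 := by
  have hc : IsCoprime h k := Int.isCoprime_iff_gcd_eq_one.mpr hco
  have hA := congrArg (Int.cast : ℤ → ℚ) (floorMomentSum_reciprocity hc hh hk)
  push_cast at hA
  have hh' : (h : ℚ) ≠ 0 := by exact_mod_cast hh.ne'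
  have hk' : (k : ℚ) ≠ 0 := by exact_mod_cast hk.ne'
  field_simp
  linear_combination 4 * h * twelve_mul_dedekindSum hc hk
    + 4 * k * twelve_mul_dedekindSum hc.symm hh - 4 * hA
end

section
/- Let h and k be coprime integers with k ≥ 1. Then 6·k·s(h,k) is an integer. -/
open Finset

theorem saw_intCast_div_of_not_dvd {a k : ℤ} (hk : 0 < k) (ha : ¬ k ∣ a) :
    saw (a / k) = ((2 * (a % k) - k : ℤ) : ℚ) / (2 * k) := by
  have hden : ((a : ℚ) / k).den ≠ 1 := by
    rwa [Ne, Rat.den_div_intCast_eq_one_iff a k hk.ne']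
  lift k to ℕ using hk.le
  have hk' : (k : ℚ) ≠ 0 := by exact_mod_cast hk.ne'
  rw [saw, if_neg hden, Int.self_sub_floor, Int.cast_natCast,
    Int.fract_div_intCast_eq_div_intCast_mod]
  push_cast
  field_simp

theorem two_mul_emod_sub_modEq (a k : ℤ) : 2 * (a % k) - k ≡ 2 * a - k [ZMOD 2 * k] :=
  Int.modEq_iff_dvd.mpr ⟨a / k, by rw [Int.emod_def]; ring⟩

theorem six_mul_sum_Ico_one_quadratic (a b c : ℤ) {n : ℤ} (hn : 1 ≤ n) :
    6 * ∑ m ∈ Ico 1 n, (a * m ^ 2 + b * m + c) =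
      a * (n - 1) * n * (2 * n - 1) + 3 * b * n * (n - 1) + 6 * c * (n - 1) := by
  induction n, hn using Int.leInduction with
  | base => simp
  | succ n hn ih =>
    rw [← insert_Ico_right_eq_Ico_add_one hn, sum_insert right_notMem_Ico, mul_add, ih]
    ring

theorem three_mul_sum_Ico_one (h n : ℤ) (hn : 1 ≤ n) :
    3 * ∑ m ∈ Ico 1 n, (2 * (h * m) - n) * (2 * m - n) = h * n * (n - 1) * (n - 2) := by
  have hquad := six_mul_sum_Ico_one_quadratic (4 * h) (-2 * n * (h + 1)) (n ^ 2) hn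
  have hsummand : ∀ m : ℤ, (2 * (h * m) - n) * (2 * m - n) =
      4 * h * m ^ 2 + -2 * n * (h + 1) * m + n ^ 2 := fun m => by ring
  simp only [← hsummand] at hquad
  refine mul_left_cancel₀ two_ne_zero ?_
  linear_combination hquad

theorem two_mul_dvd_three_mul_sum_Ico_one (h : ℤ) {k : ℤ} (hk : 1 ≤ k) :
    2 * k ∣ 3 * ∑ m ∈ Ico 1 k, (2 * (h * m % k) - k) * (2 * (m % k) - k) := by
  have hsum : 3 * ∑ m ∈ Ico 1 k, (2 * (h * m % k) - k) * (2 * (m % k) - k) ≡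
      h * k * (k - 1) * (k - 2) [ZMOD 2 * k] := by
    rw [← three_mul_sum_Ico_one h k hk]
    refine Int.ModEq.mul_left 3 (Int.ModEq.sum fun m _ => ?_)
    exact (two_mul_emod_sub_modEq _ k).mul (two_mul_emod_sub_modEq m k)
  obtain ⟨c, hc⟩ := Int.even_mul_pred_self (k - 1)
  refine Int.modEq_zero_iff_dvd.mp (hsum.trans (Int.modEq_zero_iff_dvd.mpr ⟨h * c, ?_⟩))
  linear_combination h * k * hc

theorem dedekindSum_eq_sum_Ico_one {h k : ℤ} (hco : IsCoprime h k) (hk : 0 < k) :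
    dedekindSum h k =
      ((∑ m ∈ Ico 1 k, (2 * (h * m % k) - k) * (2 * (m % k) - k) : ℤ) : ℚ) / (4 * k ^ 2) := by
  have hk' : (k : ℚ) ≠ 0 := by exact_mod_cast hk.ne'
  rw [dedekindSum, ← Ico_insert_right hk, sum_insert right_notMem_Ico,
    mul_div_cancel_right₀ _ hk', saw_intCast, zero_mul, zero_add, Int.cast_sum, sum_div]
  refine sum_congr rfl fun m hm => ?_
  obtain ⟨hm_pos, hm_lt⟩ := mem_Ico.mp hm
  have hkm : ¬ k ∣ m := fun hdvd => (Int.le_of_dvd (by omega) hdvd).not_gt hm_lt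
  have hkhm : ¬ k ∣ h * m := fun hdvd => hkm (hco.symm.dvd_of_dvd_mul_left hdvd)
  rw [← Int.cast_mul, saw_intCast_div_of_not_dvd hk hkhm, saw_intCast_div_of_not_dvd hk hkm]
  push_cast
  field_simp
  ring

theorem dedekindSum_denom (h k : ℤ) (hco : Int.gcd h k = 1) (hk : 1 ≤ k) :
    ∃ n : ℤ, 6 * (k : ℚ) * dedekindSum h k = (n : ℚ) := by
  obtain ⟨n, hn⟩ := two_mul_dvd_three_mul_sum_Ico_one h hk
  refine ⟨n, ?_⟩
  have hk' : (k : ℚ) ≠ 0 := by exact_mod_cast (by omega : k ≠ 0)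
  rw [dedekindSum_eq_sum_Ico_one (Int.isCoprime_iff_gcd_eq_one.mpr hco) (by omega)]
  have hnq := congrArg (Int.cast : ℤ → ℚ) hn
  push_cast at hnq ⊢
  field_simp
  linear_combination 2 * hnq
end

section
/- Let M = (x y; z w) ∈ SL₂(ℤ) with z ≠ 0, and define n_M := (x+w)/z - sign(z)·(3 + 12·s(w,|z|)), where s denotes the Dedekind sum. Let k be an integer and M' := (1 k; 0 1) M (1 -k; 0 1). Then n_{M'} = n_M. -/
/-- The invariant n_M = (x+w)/z - sign(z)·(3 + 12·s(w,|z|)) for M = (x y; z w). -/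
noncomputable def nMat (M : Matrix (Fin 2) (Fin 2) ℤ) : ℚ :=
  ((M 0 0 + M 1 1 : ℤ) : ℚ) / ((M 1 0 : ℤ) : ℚ)
    - ((M 1 0).sign : ℚ) * (3 + 12 * dedekindSum (M 1 1) |M 1 0|)

/-! Conjugating `M` by `(1 k; 0 1)` keeps `z` and the trace `x + w`, and replaces `w` by
`w - k z`. Since the sawtooth function has period `1`, `s(h, k)` depends only on `h` modulo `k`,
so `s(w, |z|)` does not change either. -/

lemma saw_add_intCast (x : ℚ) (n : ℤ) : saw (x + n) = saw x := by
  simp only [saw, Rat.add_intCast_den, Int.floor_add_intCast, Int.cast_add]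
  ring_nf

lemma dedekindSum_add_mul_self (h c k : ℤ) : dedekindSum (h + c * k) k = dedekindSum h k := by
  rcases eq_or_ne k 0 with rfl | hk
  · simp
  refine Finset.sum_congr rfl fun m _ => ?_
  have hshift : ((h + c * k : ℤ) : ℚ) * m / k = h * m / k + ((c * m : ℤ) : ℚ) := by
    push_cast
    field_simp
  rw [hshift, saw_add_intCast]

lemma translation_mul_mul_translation_neg (M : Matrix (Fin 2) (Fin 2) ℤ) (k : ℤ) :
    !![1, k; 0, 1] * M * !![1, -k; 0, 1] =
      !![M 0 0 + k * M 1 0, M 0 1 + k * M 1 1 - k * (M 0 0 + k * M 1 0);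
        M 1 0, M 1 1 - k * M 1 0] := by
  ext i j
  fin_cases i <;> fin_cases j <;>
    simp [Matrix.mul_apply, Matrix.vecMul, dotProduct, Fin.sum_univ_two] <;> ring

theorem nMat_conj_translation_general (M M' : Matrix (Fin 2) (Fin 2) ℤ)
    (k : ℤ)
    (hM' : M' = !![1, k; 0, 1] * M * !![1, -k; 0, 1]) :
    nMat M' = nMat M := by
  have htrace : M 0 0 + k * M 1 0 + (M 1 1 - k * M 1 0) = M 0 0 + M 1 1 := by ring
  have hw : M 1 1 - k * M 1 0 = M 1 1 + (-k * (M 1 0).sign) * |M 1 0| := by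
    rw [mul_assoc, Int.sign_mul_abs]
    ring
  subst hM'
  rw [translation_mul_mul_translation_neg]
  simp only [nMat, Matrix.of_apply, Matrix.cons_val', Matrix.cons_val_zero, Matrix.cons_val_one,
    Matrix.empty_val', Matrix.cons_val_fin_one]
  rw [htrace, hw, dedekindSum_add_mul_self]

theorem nMat_conj_translation (M M' : Matrix (Fin 2) (Fin 2) ℤ)
    (hdet : M.det = 1) (hz : M 1 0 ≠ 0) (k : ℤ)
    (hM' : M' = !![1, k; 0, 1] * M * !![1, -k; 0, 1]) :
    nMat M' = nMat M :=
  nMat_conj_translation_general M M' k hM'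
end

section
/- Let p₁ and p₂ be distinct primes with p₁ ≡ p₂ ≡ 3 (mod 4) and p₁p₂ ≡ 1 (mod 8). Write the fundamental unit of ℚ(√(p₁p₂)) as ε = (t + u√(p₁p₂))/2 with positive integers t ≡ u (mod 2). Then t and u are both even. -/
/-- `ε` is the fundamental unit of the real quadratic order `O` (a subring of `ℝ`):
it is the smallest unit of `O` exceeding 1. -/
def IsFundUnit (O : Subalgebra ℤ ℝ) (ε : ℝ) : Prop :=
  1 < ε ∧ ε ∈ O ∧ ε⁻¹ ∈ O ∧ ∀ η : ℝ, 1 < η → η ∈ O → η⁻¹ ∈ O → ε ≤ η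

private lemma odd_sq_mod8 (t : ℤ) (h : t % 2 = 1) : t ^ 2 % 8 = 1 := by
  obtain ⟨k, rfl⟩ : ∃ k, t = 2 * k + 1 := ⟨t / 2, by omega⟩
  obtain ⟨m, hm⟩ := Int.even_mul_succ_self k
  have h2 : (2 * k + 1) ^ 2 = 4 * (k * (k + 1)) + 1 := by ring
  rw [hm] at h2
  omega

/-- Elements of ℤ[(1+√D)/2] have the form (a+b√D)/2 with a ≡ b (mod 2). -/
private lemma mem_adjoin_struct (D : ℤ) (hD : D % 8 = 1) (s : ℝ) (hs : s * s = (D : ℝ))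
    (x : ℝ) (hx : x ∈ Algebra.adjoin ℤ {(1 + s) / 2}) :
    ∃ a b : ℤ, a % 2 = b % 2 ∧ x = ((a : ℝ) + (b : ℝ) * s) / 2 := by
  obtain ⟨m, hm⟩ : ∃ m, D = 8 * m + 1 := ⟨D / 8, by omega⟩
  let S : Subalgebra ℤ ℝ :=
    { carrier := {x | ∃ a b : ℤ, a % 2 = b % 2 ∧ x = ((a : ℝ) + (b : ℝ) * s) / 2}
      mul_mem' := by
        rintro x y ⟨a, b, hab, rfl⟩ ⟨c, d, hcd, rfl⟩
        obtain ⟨i, rfl⟩ : ∃ i, a = b + 2 * i := ⟨(a - b) / 2, by omega⟩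
        obtain ⟨j, rfl⟩ : ∃ j, c = d + 2 * j := ⟨(c - d) / 2, by omega⟩
        refine ⟨b * d + b * j + i * d + 2 * i * j + 4 * m * b * d, b * d + i * d + b * j, ?_, ?_⟩
        · have : b * d + b * j + i * d + 2 * i * j + 4 * m * b * d =
            (b * d + i * d + b * j) + 2 * (i * j + 2 * (m * b * d)) := by ring
          omega
        · have hs' : s * s = (8 * (m : ℝ) + 1) := by
            rw [hs, hm]; push_cast; ring
          push_cast
          linear_combination ((b : ℝ) * d / 4) * hs'
      one_mem' := ⟨2, 0, by norm_num, by norm_num⟩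
      add_mem' := by
        rintro x y ⟨a, b, hab, rfl⟩ ⟨c, d, hcd, rfl⟩
        exact ⟨a + c, b + d, by omega, by push_cast; ring⟩
      zero_mem' := ⟨0, 0, rfl, by norm_num⟩
      algebraMap_mem' := fun r => ⟨2 * r, 0, by omega, by
        rw [algebraMap_int_eq, eq_intCast]; push_cast; ring⟩ }
  have hle : Algebra.adjoin ℤ {(1 + s) / 2} ≤ S := by
    apply Algebra.adjoin_le
    rintro y hy
    rw [Set.mem_singleton_iff] at hy
    exact hy ▸ ⟨1, 1, rfl, by push_cast; ring⟩
  exact hle hx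

private lemma int_eq_of_irrational {s : ℝ} (hirr : Irrational s) (x y z : ℤ)
    (h : (x : ℝ) + (y : ℝ) * s = (z : ℝ)) : x = z ∧ y = 0 := by
  by_cases hy : y = 0
  · subst hy
    simp at h
    exact ⟨by exact_mod_cast h, rfl⟩
  · exfalso
    have hyR : (y : ℝ) ≠ 0 := Int.cast_ne_zero.mpr hy
    have : s = (((z - x : ℤ) : ℚ) / ((y : ℤ) : ℚ) : ℚ) := by
      push_cast
      field_simp
      linarith [h]
    exact hirr ⟨_, this.symm⟩

theorem fundUnit_coeffs_even (p₁ p₂ : ℕ) (hp₁ : p₁.Prime) (hp₂ : p₂.Prime)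
    (hne : p₁ ≠ p₂) (h₁ : p₁ % 4 = 3) (h₂ : p₂ % 4 = 3) (h8 : (p₁ * p₂) % 8 = 1)
    (t u : ℤ) (ht : 0 < t) (hu : 0 < u) (htu : t % 2 = u % 2) (ε : ℝ)
    (hε : IsFundUnit (Algebra.adjoin ℤ {(1 + Real.sqrt (p₁ * p₂)) / 2}) ε)
    (hεtu : ε = ((t : ℝ) + (u : ℝ) * Real.sqrt (p₁ * p₂)) / 2) :
    Even t ∧ Even u := by
  set s : ℝ := Real.sqrt (p₁ * p₂) with hsdef
  set D : ℤ := ((p₁ * p₂ : ℕ) : ℤ) with hDdef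
  have hD8 : D % 8 = 1 := by
    have : ((p₁ * p₂ : ℕ) : ℤ) % 8 = 1 := by omega
    exact this
  have hs : s * s = (D : ℝ) := by
    rw [hsdef, Real.mul_self_sqrt (by positivity)]
    push_cast [hDdef]; ring
  -- irrationality of s
  have hnsq : ¬ IsSquare (p₁ * p₂) := by
    rintro ⟨k, hk⟩
    have hdvd : p₁ ∣ k * k := ⟨p₂, by linarith [hk]⟩
    have hpk : p₁ ∣ k := by
      rcases (Nat.Prime.dvd_mul hp₁).mp hdvd with h | h <;> exact h
    obtain ⟨j, rfl⟩ := hpk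
    have h2 : p₂ = p₁ * (j * j) := by
      have hpos : 0 < p₁ := hp₁.pos
      have : p₁ * p₂ = p₁ * (p₁ * (j * j)) := by rw [hk]; ring
      exact Nat.eq_of_mul_eq_mul_left hpos this
    have : p₁ ∣ p₂ := ⟨j * j, h2⟩
    exact hne ((Nat.prime_dvd_prime_iff_eq hp₁ hp₂).mp this)
  have hirr : Irrational s := by
    rw [hsdef]
    have := irrational_sqrt_natCast_iff (n := p₁ * p₂) |>.mpr hnsq
    convert this using 2
    push_cast; ring
  -- structure of ε⁻¹
  obtain ⟨hε1, -, hinv, -⟩ := hε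
  obtain ⟨a, b, hab, hinv_eq⟩ := mem_adjoin_struct D hD8 s hs _ hinv
  -- ε * ε⁻¹ = 1
  have hεpos : (0 : ℝ) < ε := lt_trans one_pos hε1
  have hmul : ε * ε⁻¹ = 1 := mul_inv_cancel₀ (ne_of_gt hεpos)
  rw [hinv_eq, hεtu] at hmul
  have key : ((t * a + u * b * D : ℤ) : ℝ) + ((t * b + u * a : ℤ) : ℝ) * s = ((4 : ℤ) : ℝ) := by
    push_cast
    linear_combination 4 * hmul - (u : ℝ) * (b : ℝ) * hs
  obtain ⟨hX, hY⟩ := int_eq_of_irrational hirr _ _ _ key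
  -- norm identity
  have hNM : (t ^ 2 - D * u ^ 2) * (a ^ 2 - D * b ^ 2) = 16 := by
    have hid : (t ^ 2 - D * u ^ 2) * (a ^ 2 - D * b ^ 2) =
        (t * a + u * b * D) ^ 2 - D * (t * b + u * a) ^ 2 := by ring
    rw [hid, hX, hY]
    norm_num
  -- parity argument
  rcases Int.emod_two_eq_zero_or_one t with htm | htm
  · constructor
    · exact Int.even_iff.mpr htm
    · exact Int.even_iff.mpr (htu ▸ htm)
  · exfalso
    have hum : u % 2 = 1 := htu ▸ htm
    obtain ⟨m, hm⟩ : ∃ m, D = 8 * m + 1 := ⟨D / 8, by omega⟩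
    have ht8 := odd_sq_mod8 t htm
    have hu8 := odd_sq_mod8 u hum
    obtain ⟨α, hα⟩ : ∃ α, t ^ 2 = 8 * α + 1 := ⟨t ^ 2 / 8, by omega⟩
    obtain ⟨β, hβ⟩ : ∃ β, u ^ 2 = 8 * β + 1 := ⟨u ^ 2 / 8, by omega⟩
    have hN : t ^ 2 - D * u ^ 2 = 8 * (α - 8 * m * β - m - β) := by
      rw [hα, hβ, hm]; ring
    -- M divisible by 4
    obtain ⟨q, hq⟩ : ∃ q, a ^ 2 - D * b ^ 2 = 4 * q := by
      rcases Int.emod_two_eq_zero_or_one a with ham | ham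
      · have hbm : b % 2 = 0 := hab ▸ ham
        obtain ⟨a', rfl⟩ : ∃ a', a = 2 * a' := ⟨a / 2, by omega⟩
        obtain ⟨b', rfl⟩ : ∃ b', b = 2 * b' := ⟨b / 2, by omega⟩
        exact ⟨a' ^ 2 - D * b' ^ 2, by ring⟩
      · have hbm : b % 2 = 1 := hab ▸ ham
        have ha8 := odd_sq_mod8 a ham
        have hb8 := odd_sq_mod8 b hbm
        obtain ⟨γ, hγ⟩ : ∃ γ, a ^ 2 = 8 * γ + 1 := ⟨a ^ 2 / 8, by omega⟩
        obtain ⟨δ, hδ⟩ : ∃ δ, b ^ 2 = 8 * δ + 1 := ⟨b ^ 2 / 8, by omega⟩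
        exact ⟨2 * (γ - 8 * m * δ - m - δ), by rw [hγ, hδ, hm]; ring⟩
    rw [hN, hq] at hNM
    have : 32 * ((α - 8 * m * β - m - β) * q) = 16 := by linarith [hNM]
    omega
end

section
/- Let p₁ and p₂ be distinct primes with p₁ ≡ p₂ ≡ 3 (mod 4), and let ε = x + y√(p₁p₂) be a unit of norm 1 with integers x, y > 0 such that x² - p₁p₂y² = 1 and p₁ε is a square in ℤ[√(p₁p₂)] up to rationals. Then there exist integers X and Y such that p₁(x + y√(p₁p₂)) = (X + Y√(p₁p₂))². -/
lemma rat_int_of_sqfree (n : ℤ) (hn : Squarefree n) (q : ℚ) (m : ℤ)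
    (h : (n : ℚ) * q ^ 2 = (m : ℚ)) : ∃ z : ℤ, (z : ℚ) = q := by
  have hden : ((q.den : ℚ)) ≠ 0 := by exact_mod_cast q.den_ne_zero
  have key : (n : ℚ) * (q.num : ℚ) ^ 2 = (m : ℚ) * (q.den : ℚ) ^ 2 := by
    have hq : (q : ℚ) = (q.num : ℚ) / (q.den : ℚ) := (Rat.num_div_den q).symm
    rw [hq] at h
    field_simp at h
    linarith [h]
  have keyZ : n * q.num ^ 2 = m * (q.den : ℤ) ^ 2 := by exact_mod_cast key
  have hdvd : ((q.den : ℤ)) ^ 2 ∣ n * q.num ^ 2 := ⟨m, by linarith [keyZ]⟩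
  have hcop : IsCoprime ((q.den : ℤ)) q.num := by
    rw [Int.isCoprime_iff_gcd_eq_one, Int.gcd]
    exact Nat.Coprime.symm q.reduced
  have hdvd' : ((q.den : ℤ)) ^ 2 ∣ n := by
    rw [mul_comm] at hdvd
    exact (IsCoprime.pow (hcop.symm)).symm.dvd_of_dvd_mul_left hdvd
  have hunit : IsUnit ((q.den : ℤ)) := hn _ (by rwa [← sq])
  have hden1 : q.den = 1 := by
    rcases Int.isUnit_iff.mp hunit with h' | h'
    · exact_mod_cast h'
    · exfalso; omega
  exact ⟨q.num, by rw [← Rat.num_div_den q, hden1]; simp⟩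

theorem p_mul_unit_is_square (p₁ p₂ : ℕ) (hp₁ : p₁.Prime) (hp₂ : p₂.Prime)
    (hne : p₁ ≠ p₂) (h₁ : p₁ % 4 = 3) (h₂ : p₂ % 4 = 3)
    (x y : ℤ) (hx : 0 < x) (hy : 0 < y) (hpell : x ^ 2 - (p₁ * p₂ : ℤ) * y ^ 2 = 1)
    (hrat : ∃ X Y : ℚ, (p₁ : ℚ) * (x : ℚ) = X ^ 2 + (p₁ * p₂ : ℚ) * Y ^ 2 ∧
      (p₁ : ℚ) * (y : ℚ) = 2 * X * Y) :
    ∃ X Y : ℤ, (p₁ : ℤ) * x = X ^ 2 + (p₁ * p₂ : ℤ) * Y ^ 2 ∧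
      (p₁ : ℤ) * y = 2 * X * Y := by
  obtain ⟨X, Y, h1, h2⟩ := hrat
  have hp1ne : (p₁ : ℚ) ≠ 0 := by exact_mod_cast hp₁.ne_zero
  have hqpell : (x : ℚ) ^ 2 - (p₁ * p₂ : ℚ) * (y : ℚ) ^ 2 = 1 := by exact_mod_cast hpell
  have hp2two : p₂ ≠ 2 := by omega
  have hsf2 : Squarefree (2 : ℤ) := Int.prime_two.squarefree
  have hsf2p : Squarefree ((2 * p₂ : ℕ) : ℤ) := by
    rw [Int.squarefree_natCast]
    exact Nat.squarefree_mul (Nat.coprime_primes Nat.prime_two hp₂ |>.mpr (Ne.symm hp2two))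
      |>.mpr ⟨Nat.squarefree_two, hp₂.squarefree⟩
  have hA : (X ^ 2 - (p₁ * p₂ : ℚ) * Y ^ 2 - (p₁ : ℚ)) *
      (X ^ 2 - (p₁ * p₂ : ℚ) * Y ^ 2 + (p₁ : ℚ)) = 0 := by
    have e : (X ^ 2 - (p₁ * p₂ : ℚ) * Y ^ 2) ^ 2 = (p₁ : ℚ) ^ 2 := by
      linear_combination -(X ^ 2 + (p₁ * p₂ : ℚ) * Y ^ 2 + (p₁ : ℚ) * x) * h1
        + (p₁ * p₂ : ℚ) * ((p₁ : ℚ) * y + 2 * X * Y) * h2 + (p₁ : ℚ) ^ 2 * hqpell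
    linear_combination e
  rcases mul_eq_zero.mp hA with hc | hc
  · -- X² - p₁p₂Y² = p₁ : 2X² = p₁(x+1), 2p₂Y² = x-1
    have eX : (2 : ℚ) * X ^ 2 = ((p₁ * x + p₁ : ℤ) : ℚ) := by
      push_cast
      linear_combination hc - h1
    have eY : ((2 * p₂ : ℕ) : ℚ) * Y ^ 2 = ((x - 1 : ℤ) : ℚ) := by
      have : (p₁ : ℚ) * (((2 * p₂ : ℕ) : ℚ) * Y ^ 2) = (p₁ : ℚ) * ((x - 1 : ℤ) : ℚ) := by
        push_cast
        linear_combination -h1 - hc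
      exact mul_left_cancel₀ hp1ne this
    obtain ⟨X₀, hX₀⟩ := rat_int_of_sqfree 2 hsf2 X _ eX
    obtain ⟨Y₀, hY₀⟩ := rat_int_of_sqfree _ hsf2p Y _ eY
    refine ⟨X₀, Y₀, ?_, ?_⟩
    · have := h1; rw [← hX₀, ← hY₀] at this; exact_mod_cast this
    · have := h2; rw [← hX₀, ← hY₀] at this; exact_mod_cast this
  · -- X² - p₁p₂Y² = -p₁ : 2X² = p₁(x-1), 2p₂Y² = x+1
    have eX : (2 : ℚ) * X ^ 2 = ((p₁ * x - p₁ : ℤ) : ℚ) := by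
      push_cast
      linear_combination hc - h1
    have eY : ((2 * p₂ : ℕ) : ℚ) * Y ^ 2 = ((x + 1 : ℤ) : ℚ) := by
      have : (p₁ : ℚ) * (((2 * p₂ : ℕ) : ℚ) * Y ^ 2) = (p₁ : ℚ) * ((x + 1 : ℤ) : ℚ) := by
        push_cast
        linear_combination -h1 - hc
      exact mul_left_cancel₀ hp1ne this
    obtain ⟨X₀, hX₀⟩ := rat_int_of_sqfree 2 hsf2 X _ eX
    obtain ⟨Y₀, hY₀⟩ := rat_int_of_sqfree _ hsf2p Y _ eY
    refine ⟨X₀, Y₀, ?_, ?_⟩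
    · have := h1; rw [← hX₀, ← hY₀] at this; exact_mod_cast this
    · have := h2; rw [← hX₀, ← hY₀] at this; exact_mod_cast this
end

section
/- Let p₁ and p₂ be distinct primes with p₁ ≡ p₂ ≡ 3 (mod 4), p₁p₂ ≡ 5 (mod 8), and suppose the fundamental unit of ℚ(√(p₁p₂)) is ε = (t + u√(p₁p₂))/2 with odd positive integers t, u (so t² - p₁p₂u² = 4, and (t,u) is the minimal positive solution of x² - p₁p₂y² = ±4). Then t ≡ 1 (mod 4). -/
/-- If `t - 2 = P * r ^ 2` with `P ≡ 3 [ZMOD 4]` and `r` odd, then `t ≡ 1 [ZMOD 4]`. -/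
lemma aux_mod_four (P r t : ℤ) (hP4 : P % 4 = 3) (hrodd : Odd r)
    (htr : t - 2 = P * r ^ 2) : t ≡ 1 [ZMOD 4] := by
  obtain ⟨m, hm⟩ := hrodd
  obtain ⟨X, hX⟩ : ∃ X, t = 4 * X + P + 2 :=
    ⟨P * (m ^ 2 + m), by rw [hm] at htr; linear_combination htr⟩
  show t % 4 = 1 % 4
  omega

set_option maxHeartbeats 1600000 in
theorem fundUnit_t_one_mod_four (p₁ p₂ : ℕ) (hp₁ : p₁.Prime) (hp₂ : p₂.Prime)
    (hne : p₁ ≠ p₂) (h₁ : p₁ % 4 = 3) (h₂ : p₂ % 4 = 3) (h8 : (p₁ * p₂) % 8 = 5)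
    (t u : ℤ) (ht : 0 < t) (hu : 0 < u) (htodd : Odd t) (huodd : Odd u)
    (hpell : t ^ 2 - (p₁ * p₂ : ℤ) * u ^ 2 = 4)
    (hmin : ∀ t' u' : ℤ, 0 < t' → 0 < u' →
      (t' ^ 2 - (p₁ * p₂ : ℤ) * u' ^ 2 = 4 ∨ t' ^ 2 - (p₁ * p₂ : ℤ) * u' ^ 2 = -4) →
      u ≤ u') :
    t ≡ 1 [ZMOD 4] := by
  have hPp : Prime ((p₁ : ℤ)) := Nat.prime_iff_prime_int.mp hp₁
  have hQp : Prime ((p₂ : ℤ)) := Nat.prime_iff_prime_int.mp hp₂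
  have hP4 : (p₁ : ℤ) % 4 = 3 := by omega
  have hQ4 : (p₂ : ℤ) % 4 = 3 := by omega
  have hN13n : 13 ≤ p₁ * p₂ := by
    have h3 : 3 ≤ p₁ := by omega
    have h3' : 3 ≤ p₂ := by omega
    have : 9 ≤ p₁ * p₂ := Nat.mul_le_mul h3 h3'
    omega
  have hcast : ((p₁ * p₂ : ℕ) : ℤ) = (p₁ : ℤ) * (p₂ : ℤ) := by push_cast; ring
  have hN13 : (13 : ℤ) ≤ (p₁ : ℤ) * (p₂ : ℤ) := by
    rw [← hcast]; exact_mod_cast hN13n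
  have hNpos : (0 : ℤ) < (p₁ : ℤ) * (p₂ : ℤ) := by linarith
  have hu2 : 1 ≤ u ^ 2 := by nlinarith
  have ht17 : 17 ≤ t ^ 2 := by nlinarith
  have ht5 : 5 ≤ t := by nlinarith
  -- key factorization
  have hfac : (t - 2) * (t + 2) = ((p₁ : ℤ) * (p₂ : ℤ)) * u ^ 2 := by
    linear_combination hpell
  -- coprimality of t-2 and t+2
  obtain ⟨k, hk⟩ := htodd
  have cop : IsCoprime (t - 2) (t + 2) := ⟨k ^ 2 + k - 1, -(k ^ 2 - k), by rw [hk]; ring⟩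
  have copPQ : IsCoprime ((p₁ : ℤ)) ((p₂ : ℤ)) :=
    Nat.isCoprime_iff_coprime.mpr ((Nat.coprime_primes hp₁ hp₂).mpr hne)
  have hPdvd : (p₁ : ℤ) ∣ (t - 2) * (t + 2) := ⟨(p₂ : ℤ) * u ^ 2, by rw [hfac]; ring⟩
  have hQdvd : (p₂ : ℤ) ∣ (t - 2) * (t + 2) := ⟨(p₁ : ℤ) * u ^ 2, by rw [hfac]; ring⟩
  have hPcase := hPp.2.2 _ _ hPdvd
  have hQcase := hQp.2.2 _ _ hQdvd
  -- helper: u = |r| * |s| whenever r^2 * s^2 = u^2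
  have habs : ∀ r s : ℤ, r ^ 2 * s ^ 2 = u ^ 2 → u = |r| * |s| := by
    intro r s h
    have h1 : (|r| * |s|) ^ 2 = u ^ 2 := by rw [mul_pow, sq_abs, sq_abs, h]
    have h2 : (|r| * |s| - u) * (|r| * |s| + u) = 0 := by linear_combination h1
    have h3 : 0 ≤ |r| * |s| := mul_nonneg (abs_nonneg r) (abs_nonneg s)
    rcases mul_eq_zero.mp h2 with h4 | h4
    · linarith
    · linarith
  -- helper: positivity transfer
  have hposcancel : ∀ c a : ℤ, 0 < c → 0 < c * a → 0 < a := by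
    intro c a hc h
    rcases mul_pos_iff.mp h with ⟨_, h'⟩ | ⟨h', _⟩
    · exact h'
    · linarith
  rcases hPcase with hP1 | hP2 <;> rcases hQcase with hQ1 | hQ2
  · -- both divide t - 2 : contradiction with minimality
    exfalso
    obtain ⟨a, ha⟩ := copPQ.mul_dvd hP1 hQ1
    have hab : a * (t + 2) = u ^ 2 := by
      have h' : ((p₁ : ℤ) * (p₂ : ℤ)) * (a * (t + 2)) = ((p₁ : ℤ) * (p₂ : ℤ)) * u ^ 2 := by
        rw [← hfac, ha]; ring
      exact mul_left_cancel₀ (ne_of_gt hNpos) h'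
    have hapos : 0 < a := hposcancel _ _ hNpos (by linarith [ha.symm.le, ha.le])
    have copA : IsCoprime a (t + 2) :=
      IsCoprime.of_isCoprime_of_dvd_left cop ⟨(p₁ : ℤ) * (p₂ : ℤ), by rw [ha]; ring⟩
    obtain ⟨r, hr⟩ := Int.sq_of_isCoprime copA hab
    have hra : a = r ^ 2 := by
      rcases hr with hr | hr
      · exact hr
      · exfalso; rw [hr] at hapos; linarith [sq_nonneg r]
    obtain ⟨s, hs⟩ := Int.sq_of_isCoprime copA.symm (by rw [mul_comm]; exact hab)
    have hsa : t + 2 = s ^ 2 := by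
      rcases hs with hs | hs
      · exact hs
      · exfalso; linarith [sq_nonneg s]
    have hurs : u = |r| * |s| := habs r s (by rw [← hra, ← hsa]; exact hab)
    have hr1 : 1 ≤ |r| := by
      rcases lt_or_ge 0 (|r|) with h' | h'
      · omega
      · exfalso
        have hr0 : r = 0 := abs_eq_zero.mp (le_antisymm h' (abs_nonneg r))
        rw [hr0] at hra; simp at hra; omega
    have hs2 : 2 ≤ |s| := by
      by_contra h'
      push_neg at h'
      have h0 : 0 ≤ |s| := abs_nonneg s
      have : |s| ^ 2 ≤ 1 := by nlinarith
      rw [sq_abs, ← hsa] at this; linarith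
    have hmul : |r| * 2 ≤ |r| * |s| := mul_le_mul_of_nonneg_left hs2 (by linarith)
    have hrltu : |r| < u := by rw [hurs]; linarith
    have hkey : |s| ^ 2 - ((p₁ : ℤ) * (p₂ : ℤ)) * |r| ^ 2 = 4 := by
      rw [sq_abs, sq_abs, ← hsa, ← hra, ← ha]; ring
    have := hmin (|s|) (|r|) (by linarith) (by linarith) (Or.inl hkey)
    linarith
  · -- p₁ ∣ t - 2, p₂ ∣ t + 2 : t ≡ 1 [ZMOD 4] via p₁
    obtain ⟨a, ha⟩ := hP1
    obtain ⟨b, hb⟩ := hQ2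
    have hab : a * b = u ^ 2 := by
      have h' : ((p₁ : ℤ) * (p₂ : ℤ)) * (a * b) = ((p₁ : ℤ) * (p₂ : ℤ)) * u ^ 2 := by
        rw [← hfac, ha, hb]; ring
      exact mul_left_cancel₀ (ne_of_gt hNpos) h'
    have hapos : 0 < a := hposcancel _ _ (by exact_mod_cast hp₁.pos : (0:ℤ) < (p₁:ℤ)) (by linarith [ha.le])
    have copA : IsCoprime a b :=
      IsCoprime.of_isCoprime_of_dvd_left
        (IsCoprime.of_isCoprime_of_dvd_right cop ⟨(p₂ : ℤ), by rw [hb]; ring⟩)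
        ⟨(p₁ : ℤ), by rw [ha]; ring⟩
    obtain ⟨r, hr⟩ := Int.sq_of_isCoprime copA hab
    have hra : a = r ^ 2 := by
      rcases hr with hr | hr
      · exact hr
      · exfalso; rw [hr] at hapos; linarith [sq_nonneg r]
    have hrdvd : r ∣ u := by
      have : r ^ 2 ∣ u ^ 2 := ⟨b, by rw [← hab, hra]⟩
      exact (Int.pow_dvd_pow_iff two_ne_zero).mp this
    have hrodd : Odd r := by
      obtain ⟨c, hc⟩ := hrdvd
      rcases Int.even_or_odd r with he | ho
      · exfalso
        obtain ⟨d, hd⟩ := he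
        have h2u : (2 : ℤ) ∣ u := ⟨d * c, by rw [hc, hd]; ring⟩
        obtain ⟨c2, hc2⟩ := h2u
        obtain ⟨j, hj⟩ := huodd
        omega
      · exact ho
    exact aux_mod_four (p₁ : ℤ) r t hP4 hrodd (by rw [ha, hra])
  · -- p₂ ∣ t - 2, p₁ ∣ t + 2 : t ≡ 1 [ZMOD 4] via p₂
    obtain ⟨a, ha⟩ := hQ1
    obtain ⟨b, hb⟩ := hP2
    have hab : a * b = u ^ 2 := by
      have h' : ((p₁ : ℤ) * (p₂ : ℤ)) * (a * b) = ((p₁ : ℤ) * (p₂ : ℤ)) * u ^ 2 := by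
        rw [← hfac, ha, hb]; ring
      exact mul_left_cancel₀ (ne_of_gt hNpos) h'
    have hapos : 0 < a := hposcancel _ _ (by exact_mod_cast hp₂.pos : (0:ℤ) < (p₂:ℤ)) (by linarith [ha.le])
    have copA : IsCoprime a b :=
      IsCoprime.of_isCoprime_of_dvd_left
        (IsCoprime.of_isCoprime_of_dvd_right cop ⟨(p₁ : ℤ), by rw [hb]; ring⟩)
        ⟨(p₂ : ℤ), by rw [ha]; ring⟩
    obtain ⟨r, hr⟩ := Int.sq_of_isCoprime copA hab
    have hra : a = r ^ 2 := by
      rcases hr with hr | hr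
      · exact hr
      · exfalso; rw [hr] at hapos; linarith [sq_nonneg r]
    have hrdvd : r ∣ u := by
      have : r ^ 2 ∣ u ^ 2 := ⟨b, by rw [← hab, hra]⟩
      exact (Int.pow_dvd_pow_iff two_ne_zero).mp this
    have hrodd : Odd r := by
      obtain ⟨c, hc⟩ := hrdvd
      rcases Int.even_or_odd r with he | ho
      · exfalso
        obtain ⟨d, hd⟩ := he
        have h2u : (2 : ℤ) ∣ u := ⟨d * c, by rw [hc, hd]; ring⟩
        obtain ⟨c2, hc2⟩ := h2u
        obtain ⟨j, hj⟩ := huodd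
        omega
      · exact ho
    exact aux_mod_four (p₂ : ℤ) r t hQ4 hrodd (by rw [ha, hra])
  · -- both divide t + 2 : contradiction with minimality
    exfalso
    obtain ⟨b, hb⟩ := copPQ.mul_dvd hP2 hQ2
    have hab : (t - 2) * b = u ^ 2 := by
      have h' : ((p₁ : ℤ) * (p₂ : ℤ)) * ((t - 2) * b) = ((p₁ : ℤ) * (p₂ : ℤ)) * u ^ 2 := by
        rw [← hfac, hb]; ring
      exact mul_left_cancel₀ (ne_of_gt hNpos) h'
    have hbpos : 0 < b := hposcancel _ _ hNpos (by linarith [hb.le])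
    have copB : IsCoprime (t - 2) b :=
      IsCoprime.of_isCoprime_of_dvd_right cop ⟨(p₁ : ℤ) * (p₂ : ℤ), by rw [hb]; ring⟩
    obtain ⟨r, hr⟩ := Int.sq_of_isCoprime copB hab
    have hra : t - 2 = r ^ 2 := by
      rcases hr with hr | hr
      · exact hr
      · exfalso; nlinarith [sq_nonneg r]
    obtain ⟨s, hs⟩ := Int.sq_of_isCoprime copB.symm (by rw [mul_comm]; exact hab)
    have hsb : b = s ^ 2 := by
      rcases hs with hs | hs
      · exact hs
      · exfalso; rw [hs] at hbpos; linarith [sq_nonneg s]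
    have hurs : u = |r| * |s| := habs r s (by rw [← hra, ← hsb]; exact hab)
    have hs1 : 1 ≤ |s| := by
      rcases lt_or_ge 0 (|s|) with h' | h'
      · omega
      · exfalso
        have hs0 : s = 0 := abs_eq_zero.mp (le_antisymm h' (abs_nonneg s))
        rw [hs0] at hsb; simp at hsb; omega
    have hr2 : 2 ≤ |r| := by
      by_contra h'
      push_neg at h'
      have h0 : 0 ≤ |r| := abs_nonneg r
      have : |r| ^ 2 ≤ 1 := by nlinarith
      rw [sq_abs, ← hra] at this; linarith
    have hmul : |s| * 2 ≤ |s| * |r| := mul_le_mul_of_nonneg_left hr2 (by linarith)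
    have hsltu : |s| < u := by rw [hurs]; linarith [mul_comm (|r|) (|s|)]
    have hkey : |r| ^ 2 - ((p₁ : ℤ) * (p₂ : ℤ)) * |s| ^ 2 = -4 := by
      rw [sq_abs, sq_abs, ← hra, ← hsb, ← hb]; ring
    have := hmin (|r|) (|s|) (by linarith) (by linarith) (Or.inr hkey)
    linarith
end

section
/- Let t and u be odd positive integers with t² - Du² = 4, where D = p₁p₂ is a product of distinct primes p₁ ≡ p₂ ≡ 3 (mod 4). Then gcd(t-2, t+2) = 1 and (t-2)(t+2) = D u², so there exist odd positive integers r, s with (t-2, t+2) equal to one of (p₁r², p₂s²), (p₂r², p₁s²), (p₁p₂r², s²), (r², p₁p₂s²). -/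
/-! Since `t` is odd, `t - 2` and `t + 2` are coprime odd positive integers whose product is
`p₁ p₂ u²`. Each prime `pᵢ` divides exactly one of the two factors, and once these primes are
divided out the remaining cofactors are coprime with product `u²`, hence both squares. -/

theorem Int.isCoprime_sub_two_add_two {t : ℤ} (ht : Odd t) : IsCoprime (t - 2) (t + 2) := by
  rw [show t + 2 = 2 ^ 2 + (t - 2) * 1 by ring]
  exact ((Int.isCoprime_two_right.mpr (ht.sub_even even_two)).pow_right).add_mul_left_right 1

theorem Int.exists_pos_sq_of_isCoprime_of_mul_eq_sq {a b c : ℤ} (ha : 0 < a)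
    (hab : IsCoprime a b) (h : a * b = c ^ 2) : ∃ r, 0 < r ∧ a = r ^ 2 := by
  obtain ⟨r, hr | hr⟩ := Int.sq_of_isCoprime hab h
  · refine ⟨|r|, abs_pos.mpr ?_, by rw [sq_abs, hr]⟩
    rintro rfl
    simp [hr] at ha
  · exfalso
    nlinarith [sq_nonneg r]

theorem Int.exists_odd_sq_of_isCoprime_of_mul_eq {a b d e u : ℤ} (hd : 0 < d) (he : e ≠ 0)
    (ha : 0 < a) (haodd : Odd a) (hab : IsCoprime a b) (hda : d ∣ a) (heb : e ∣ b)
    (h : a * b = d * e * u ^ 2) : ∃ r, Odd r ∧ 0 < r ∧ a = d * r ^ 2 := by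
  obtain ⟨c, rfl⟩ := hda
  obtain ⟨f, rfl⟩ := heb
  have hcf : c * f = u ^ 2 := by
    apply mul_left_cancel₀ (mul_ne_zero hd.ne' he)
    linear_combination h
  obtain ⟨r, hr, rfl⟩ := Int.exists_pos_sq_of_isCoprime_of_mul_eq_sq
    (pos_of_mul_pos_right ha hd.le) hab.of_mul_left_right.of_mul_right_right hcf
  exact ⟨r, (Int.odd_pow' two_ne_zero).mp (Int.odd_mul.mp haodd).2, hr, rfl⟩

theorem Int.exists_odd_sq_pair_of_isCoprime_of_mul_eq {a b d e u : ℤ} (hd : 0 < d) (he : 0 < e)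
    (ha : 0 < a) (hb : 0 < b) (haodd : Odd a) (hbodd : Odd b) (hab : IsCoprime a b)
    (hda : d ∣ a) (heb : e ∣ b) (h : a * b = d * e * u ^ 2) :
    ∃ r s, Odd r ∧ Odd s ∧ 0 < r ∧ 0 < s ∧ a = d * r ^ 2 ∧ b = e * s ^ 2 := by
  obtain ⟨r, hr, hr0, har⟩ :=
    Int.exists_odd_sq_of_isCoprime_of_mul_eq hd he.ne' ha haodd hab hda heb h
  obtain ⟨s, hs, hs0, hbs⟩ := Int.exists_odd_sq_of_isCoprime_of_mul_eq (u := u) he hd.ne' hb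
    hbodd hab.symm heb hda (by linear_combination h)
  exact ⟨r, s, hr, hs, hr0, hs0, har, hbs⟩

theorem Int.exists_odd_sq_cases_of_mul_eq_prime_mul_prime_mul_sq {p₁ p₂ : ℕ}
    (hp₁ : p₁.Prime) (hp₂ : p₂.Prime) (hne : p₁ ≠ p₂) {a b u : ℤ} (ha : 0 < a) (hb : 0 < b)
    (haodd : Odd a) (hbodd : Odd b) (hab : IsCoprime a b) (h : a * b = p₁ * p₂ * u ^ 2) :
    ∃ r s : ℤ, Odd r ∧ Odd s ∧ 0 < r ∧ 0 < s ∧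
      ((a = p₁ * r ^ 2 ∧ b = p₂ * s ^ 2) ∨ (a = p₂ * r ^ 2 ∧ b = p₁ * s ^ 2) ∨
       (a = p₁ * p₂ * r ^ 2 ∧ b = s ^ 2) ∨ (a = r ^ 2 ∧ b = p₁ * p₂ * s ^ 2)) := by
  have hp₁0 : (0 : ℤ) < p₁ := by exact_mod_cast hp₁.pos
  have hp₂0 : (0 : ℤ) < p₂ := by exact_mod_cast hp₂.pos
  have hp₁₂ : IsCoprime (p₁ : ℤ) p₂ :=
    Nat.isCoprime_iff_coprime.mpr ((Nat.coprime_primes hp₁ hp₂).mpr hne)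
  have h₁ : (p₁ : ℤ) ∣ a * b := h ▸ Dvd.intro (p₂ * u ^ 2) (by ring)
  have h₂ : (p₂ : ℤ) ∣ a * b := h ▸ Dvd.intro (p₁ * u ^ 2) (by ring)
  have pair {d e : ℤ} (hd : 0 < d) (he : 0 < e) (hda : d ∣ a) (heb : e ∣ b)
      (hde : a * b = d * e * u ^ 2) :=
    Int.exists_odd_sq_pair_of_isCoprime_of_mul_eq hd he ha hb haodd hbodd hab hda heb hde
  rcases (Nat.prime_iff_prime_int.mp hp₁).dvd_mul.mp h₁ with h₁a | h₁b <;>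
    rcases (Nat.prime_iff_prime_int.mp hp₂).dvd_mul.mp h₂ with h₂a | h₂b
  · obtain ⟨r, s, hr, hs, hr0, hs0, har, hbs⟩ :=
      pair (by positivity) one_pos (hp₁₂.mul_dvd h₁a h₂a) (one_dvd b) (by rw [h, mul_one])
    exact ⟨r, s, hr, hs, hr0, hs0, .inr (.inr (.inl ⟨har, by rwa [one_mul] at hbs⟩))⟩
  · obtain ⟨r, s, hr, hs, hr0, hs0, har, hbs⟩ := pair hp₁0 hp₂0 h₁a h₂b h
    exact ⟨r, s, hr, hs, hr0, hs0, .inl ⟨har, hbs⟩⟩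
  · obtain ⟨r, s, hr, hs, hr0, hs0, har, hbs⟩ :=
      pair hp₂0 hp₁0 h₂a h₁b (by rw [h, mul_comm (p₂ : ℤ)])
    exact ⟨r, s, hr, hs, hr0, hs0, .inr (.inl ⟨har, hbs⟩)⟩
  · obtain ⟨r, s, hr, hs, hr0, hs0, har, hbs⟩ :=
      pair one_pos (by positivity) (one_dvd a) (hp₁₂.mul_dvd h₁b h₂b) (by rw [h, one_mul])
    exact ⟨r, s, hr, hs, hr0, hs0, .inr (.inr (.inr ⟨by rwa [one_mul] at har, hbs⟩))⟩

theorem pell_factorization_cases_general (p₁ p₂ : ℕ) (hp₁ : p₁.Prime) (hp₂ : p₂.Prime)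
    (hne : p₁ ≠ p₂)
    (t u : ℤ) (ht : 0 < t) (htodd : Odd t)
    (hpell : t ^ 2 - (p₁ * p₂ : ℤ) * u ^ 2 = 4) :
    Int.gcd (t - 2) (t + 2) = 1 ∧ (t - 2) * (t + 2) = (p₁ * p₂ : ℤ) * u ^ 2 ∧
    ∃ r s : ℤ, Odd r ∧ Odd s ∧ 0 < r ∧ 0 < s ∧
      ((t - 2 = p₁ * r ^ 2 ∧ t + 2 = p₂ * s ^ 2) ∨
       (t - 2 = p₂ * r ^ 2 ∧ t + 2 = p₁ * s ^ 2) ∨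
       (t - 2 = p₁ * p₂ * r ^ 2 ∧ t + 2 = s ^ 2) ∨
       (t - 2 = r ^ 2 ∧ t + 2 = p₁ * p₂ * s ^ 2)) := by
  have hprod : (t - 2) * (t + 2) = (p₁ * p₂ : ℤ) * u ^ 2 := by linear_combination hpell
  have hcop := Int.isCoprime_sub_two_add_two htodd
  have ht2 : 2 < t := by
    have hDu : (0 : ℤ) ≤ p₁ * p₂ * u ^ 2 := by positivity
    have h2 : 2 ≤ t := by nlinarith
    rcases h2.lt_or_eq with h2 | rfl
    · exact h2
    · exact absurd htodd (by decide)
  refine ⟨Int.isCoprime_iff_gcd_eq_one.mp hcop, hprod, ?_⟩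
  exact Int.exists_odd_sq_cases_of_mul_eq_prime_mul_prime_mul_sq hp₁ hp₂ hne (by linarith)
    (by linarith) (htodd.sub_even even_two) (htodd.add_even even_two) hcop hprod

theorem pell_factorization_cases (p₁ p₂ : ℕ) (hp₁ : p₁.Prime) (hp₂ : p₂.Prime)
    (hne : p₁ ≠ p₂) (h₁ : p₁ % 4 = 3) (h₂ : p₂ % 4 = 3)
    (t u : ℤ) (ht : 0 < t) (hu : 0 < u) (htodd : Odd t) (huodd : Odd u)
    (hpell : t ^ 2 - (p₁ * p₂ : ℤ) * u ^ 2 = 4) :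
    Int.gcd (t - 2) (t + 2) = 1 ∧ (t - 2) * (t + 2) = (p₁ * p₂ : ℤ) * u ^ 2 ∧
    ∃ r s : ℤ, Odd r ∧ Odd s ∧ 0 < r ∧ 0 < s ∧
      ((t - 2 = p₁ * r ^ 2 ∧ t + 2 = p₂ * s ^ 2) ∨
       (t - 2 = p₂ * r ^ 2 ∧ t + 2 = p₁ * s ^ 2) ∨
       (t - 2 = p₁ * p₂ * r ^ 2 ∧ t + 2 = s ^ 2) ∨
       (t - 2 = r ^ 2 ∧ t + 2 = p₁ * p₂ * s ^ 2)) :=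
  pell_factorization_cases_general p₁ p₂ hp₁ hp₂ hne t u ht htodd hpell
end

section
/- Let Δ > 0 be a non-square discriminant and ξ = (b+√Δ)/(2a) a reduced quadratic irrational of discriminant Δ (i.e., ξ > 1 and -1 < ξ' < 0, where ξ' is the conjugate), with purely periodic continued fraction ξ = [v₀, v₁, …, v_{2m-1}] of even period length 2m. Let ξ^op := ⌊ξ⌋ - ξ'. Then ξ^op = [v₀, v_{2m-1}, v_{2m-2}, …, v₁] (purely periodic) and the alternating sums of the periods agree: Σ_{i=0}^{2m-1} (-1)^i v_i for ξ equals the corresponding alternating sum for ξ^op. -/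
/-!
Write `ξₙ = cfIter ξ n`, `vₙ = ⌊ξₙ⌋` and let `σₙ` be the Galois conjugate of `ξₙ`, so that
`σ₀ = ξ'` and `σₙ₊₁ = 1 / (σₙ - vₙ)`. Since every `vₙ ≥ 1`, all `σₙ` stay in `(-1, 0)`, so
`ηₙ₊₁ := -1 / σₙ₊₁ = vₙ + (-σₙ)` has integer part `vₙ` and the Gauss map sends `ηₙ₊₁` to `ηₙ`:
the `ηₙ` run the continued fraction backwards. As `ξ₂ₘ = ξ`, conjugation gives `σ₂ₘ = ξ'`, hence
`ξ^op = v₀ - ξ' = η₂ₘ₊₁`, whose partial quotients are `v₂ₘ = v₀, v₂ₘ₋₁, …, v₁` and which returns to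
`η₁ = ξ^op` after `2m` steps. Reversing a period of even length preserves the parity of indices,
so the alternating sums agree.
-/

/-- The Gauss map iterates of the continued fraction algorithm. -/
noncomputable def cfIter (ξ : ℝ) : ℕ → ℝ
  | 0 => ξ
  | n + 1 => 1 / (cfIter ξ n - ⌊cfIter ξ n⌋)

/-- The `n`-th partial quotient of the continued fraction of `ξ`. -/
noncomputable def cfDigit (ξ : ℝ) (n : ℕ) : ℤ := ⌊cfIter ξ n⌋

lemma neg_one_pow_sub_of_even {N j : ℕ} (hN : Even N) (hj : j ≤ N) :
    (-1 : ℤ) ^ (N - j) = (-1) ^ j := by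
  rcases Nat.even_or_odd j with hj' | hj'
  · rw [((Nat.even_sub hj).2 (iff_of_true hN hj')).neg_one_pow, hj'.neg_one_pow]
  · have : ¬Even (N - j) := by
      rw [Nat.even_sub hj]; exact fun h => Nat.not_even_iff_odd.2 hj' (h.1 hN)
    rw [(Nat.not_even_iff_odd.1 this).neg_one_pow, hj'.neg_one_pow]

lemma alternating_sum_reflect (v : ℕ → ℤ) {N : ℕ} (hN : Even N) (hv : v N = v 0) :
    ∑ i ∈ Finset.range N, (-1 : ℤ) ^ i * v (N - i) = ∑ i ∈ Finset.range N, (-1 : ℤ) ^ i * v i := by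
  have hreflect := Finset.sum_range_reflect (fun i => (-1 : ℤ) ^ i * v (N - i)) (N + 1)
  simp only [Nat.add_sub_cancel] at hreflect
  rw [Finset.sum_congr rfl fun j hj => by
    rw [Nat.sub_sub_self (Finset.mem_range_succ_iff.1 hj),
      neg_one_pow_sub_of_even hN (Finset.mem_range_succ_iff.1 hj)]] at hreflect
  rw [Finset.sum_range_succ, Finset.sum_range_succ, Nat.sub_self, hv] at hreflect
  exact (add_left_injective _ hreflect).symm

section Pairs

def IsConjPair (s x y : ℝ) : Prop := ∃ p q : ℚ, x = p + q * s ∧ y = p - q * s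

variable {s x y : ℝ}

lemma IsConjPair.sub_intCast (h : IsConjPair s x y) (k : ℤ) : IsConjPair s (x - k) (y - k) := by
  obtain ⟨p, q, rfl, rfl⟩ := h
  exact ⟨p - k, q, by push_cast; ring, by push_cast; ring⟩

lemma IsConjPair.inv {d : ℚ} (hs : Irrational s) (hsd : s ^ 2 = d) (h : IsConjPair s x y) :
    IsConjPair s x⁻¹ y⁻¹ := by
  obtain ⟨p, q, rfl, rfl⟩ := h
  set n : ℚ := p ^ 2 - q ^ 2 * d
  have hnorm : ((p : ℝ) + q * s) * (p - q * s) = n := by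
    simp only [n]; push_cast; rw [← hsd]; ring
  by_cases hn : n = 0
  · -- a vanishing norm would make `s = ± p / q` rational
    have hq : q = 0 := by
      by_contra hq
      have hsq : s ^ 2 = ((p / q : ℚ) : ℝ) ^ 2 := by
        have : d * q ^ 2 = p ^ 2 := by simp only [n] at hn; linarith
        rw [hsd]; push_cast; field_simp; exact_mod_cast this
      rcases sq_eq_sq_iff_eq_or_eq_neg.1 hsq with h | h
      · exact hs ⟨_, h.symm⟩
      · exact hs ⟨-(p / q), by push_cast at h ⊢; exact h.symm⟩
    have hp : p = 0 := by simpa [n, hq] using hn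
    exact ⟨0, 0, by simp [hp, hq], by simp [hp, hq]⟩
  · have hn' : (n : ℝ) ≠ 0 := by exact_mod_cast hn
    have hx : (p : ℝ) + q * s ≠ 0 := left_ne_zero_of_mul (hnorm ▸ hn')
    have hy : (p : ℝ) - q * s ≠ 0 := right_ne_zero_of_mul (hnorm ▸ hn')
    refine ⟨p / n, -q / n, ?_, ?_⟩
    · push_cast; field_simp; linear_combination -hnorm
    · push_cast; field_simp; linear_combination -hnorm

lemma IsConjPair.right_unique (hs : Irrational s) (h : IsConjPair s x y) {y' : ℝ}
    (h' : IsConjPair s x y') : y = y' := by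
  obtain ⟨p, q, rfl, rfl⟩ := h
  obtain ⟨p', q', hx, rfl⟩ := h'
  have hq : q = q' := by
    by_contra hne
    have : ((q - q' : ℚ) : ℝ) * s = ((p' - p : ℚ) : ℝ) := by push_cast; linarith
    exact (p' - p).not_irrational (this ▸ irrational_ratCast_mul_iff.2 ⟨sub_ne_zero.2 hne, hs⟩)
  subst hq
  have hp : (p : ℝ) = p' := by linarith
  rw [hp]

end Pairs

lemma cfIter_succ (ξ : ℝ) (n : ℕ) : cfIter ξ (n + 1) = (Int.fract (cfIter ξ n))⁻¹ := by
  rw [cfIter, one_div, Int.fract]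

lemma cfIter_add (ξ : ℝ) (k n : ℕ) : cfIter ξ (k + n) = cfIter (cfIter ξ k) n := by
  induction n with
  | zero => rfl
  | succ n ih => rw [← add_assoc, cfIter_succ, ih, cfIter_succ]

lemma cfDigit_add (ξ : ℝ) (k n : ℕ) : cfDigit ξ (k + n) = cfDigit (cfIter ξ k) n := by
  rw [cfDigit, cfIter_add, cfDigit]

lemma cfDigit_add_of_cfIter_eq {ξ : ℝ} {N : ℕ} (h : cfIter ξ N = ξ) (n : ℕ) :
    cfDigit ξ (n + N) = cfDigit ξ n := by
  rw [add_comm, cfDigit_add, h]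

lemma Irrational.fract_pos {x : ℝ} (h : Irrational x) : 0 < Int.fract x :=
  (Int.fract_nonneg x).lt_of_ne fun h0 => (h.sub_intCast ⌊x⌋).ne_int 0 (by simpa using h0.symm)

lemma Irrational.cfIter {ξ : ℝ} (h : Irrational ξ) (n : ℕ) : Irrational (cfIter ξ n) := by
  induction n with
  | zero => exact h
  | succ n ih => rw [cfIter_succ]; exact (ih.sub_intCast _).inv

lemma one_le_cfDigit {ξ : ℝ} (h : Irrational ξ) (h1 : 1 < ξ) (n : ℕ) : 1 ≤ cfDigit ξ n := by
  refine Int.le_floor.2 ?_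
  cases n with
  | zero => exact_mod_cast h1.le
  | succ n =>
    rw [cfIter_succ, Int.cast_one]
    exact (one_lt_inv₀ (h.cfIter n).fract_pos).2 (Int.fract_lt_one _) |>.le

open GenContFract in
lemma intFractPair_stream_eq {ξ : ℝ} (h : Irrational ξ) (n : ℕ) :
    IntFractPair.stream ξ n = some (IntFractPair.of (cfIter ξ n)) := by
  induction n with
  | zero => rfl
  | succ n ih =>
    rw [IntFractPair.stream_succ_of_some ih ((h.cfIter n).fract_pos.ne'), cfIter_succ]
    rfl

open GenContFract in
lemma eq_of_cfDigit_eq {ξ η : ℝ} (hξ : Irrational ξ) (hη : Irrational η)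
    (h : ∀ n, cfDigit ξ n = cfDigit η n) : ξ = η := by
  have hof : GenContFract.of ξ = GenContFract.of η := by
    refine GenContFract.ext ?_ (Stream'.Seq.ext fun n => ?_)
    · rw [of_h_eq_floor, of_h_eq_floor]; exact_mod_cast h 0
    · rw [get?_of_eq_some_of_succ_get?_intFractPair_stream (intFractPair_stream_eq hξ (n + 1)),
        get?_of_eq_some_of_succ_get?_intFractPair_stream (intFractPair_stream_eq hη (n + 1))]
      exact congrArg (fun k : ℤ => some (⟨1, k⟩ : GenContFract.Pair ℝ)) (h (n + 1))
  exact tendsto_nhds_unique (hof ▸ of_convergence ξ) (of_convergence η)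

lemma cfIter_eq_self_of_periodic {ξ : ℝ} (h : Irrational ξ) {N : ℕ}
    (hper : ∀ n, cfDigit ξ (n + N) = cfDigit ξ n) : cfIter ξ N = ξ :=
  eq_of_cfDigit_eq (h.cfIter N) h fun n => by rw [← cfDigit_add, add_comm, hper]

/-- When `σ` is the conjugate of `ξ`, `cfConj ξ σ n` is the conjugate of `cfIter ξ n`
(`IsConjPair.cfIter_cfConj`). -/
noncomputable def cfConj (ξ σ : ℝ) : ℕ → ℝ
  | 0 => σ
  | n + 1 => (cfConj ξ σ n - cfDigit ξ n)⁻¹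

section Conjugate

open Set

variable {ξ σ : ℝ}

lemma IsConjPair.cfIter_cfConj {s : ℝ} {d : ℚ} (hs : Irrational s) (hsd : s ^ 2 = d)
    (h : IsConjPair s ξ σ) (n : ℕ) : IsConjPair s (cfIter ξ n) (cfConj ξ σ n) := by
  induction n with
  | zero => exact h
  | succ n ih => rw [cfIter_succ, cfConj, Int.fract]; exact (ih.sub_intCast _).inv hs hsd

lemma cfConj_mem_Ioo (hv : ∀ n, 1 ≤ cfDigit ξ n) (hσ : σ ∈ Ioo (-1) 0) (n : ℕ) :
    cfConj ξ σ n ∈ Ioo (-1) 0 := by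
  induction n with
  | zero => exact hσ
  | succ n ih =>
    have hv' : (1 : ℝ) ≤ cfDigit ξ n := by exact_mod_cast hv n
    have hneg : cfConj ξ σ n - cfDigit ξ n < -1 := by linarith [ih.2]
    rw [cfConj]
    exact ⟨by rw [neg_lt, ← inv_neg, inv_lt_one₀ (by linarith)]; linarith,
      inv_lt_zero.2 (by linarith)⟩

lemma neg_inv_cfConj_succ (t : ℕ) :
    -(cfConj ξ σ (t + 1))⁻¹ = cfDigit ξ t + -cfConj ξ σ t := by
  rw [cfConj, inv_inv]; ring

lemma cfIter_neg_inv_cfConj (hσ : ∀ n, cfConj ξ σ n ∈ Ioo (-1) 0) {j k : ℕ} (hjk : j ≤ k) :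
    cfIter (-(cfConj ξ σ k)⁻¹) j = -(cfConj ξ σ (k - j))⁻¹ := by
  induction j with
  | zero => rfl
  | succ j ih =>
    obtain ⟨t, ht⟩ : ∃ t, k - j = t + 1 := ⟨k - j - 1, by omega⟩
    have hfract : Int.fract (-cfConj ξ σ t) = -cfConj ξ σ t :=
      Int.fract_eq_self.2 ⟨by linarith [(hσ t).2], by linarith [(hσ t).1]⟩
    rw [cfIter_succ, ih (by omega), ht, neg_inv_cfConj_succ, Int.fract_intCast_add, hfract,
      inv_neg, show k - (j + 1) = t by omega]

lemma cfDigit_neg_inv_cfConj (hσ : ∀ n, cfConj ξ σ n ∈ Ioo (-1) 0) {j k : ℕ} (hjk : j < k) :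
    cfDigit (-(cfConj ξ σ k)⁻¹) j = cfDigit ξ (k - 1 - j) := by
  obtain ⟨t, ht⟩ : ∃ t, k - j = t + 1 := ⟨k - j - 1, by omega⟩
  have hfloor : ⌊-cfConj ξ σ t⌋ = 0 :=
    Int.floor_eq_zero_iff.2 ⟨by linarith [(hσ t).2], by linarith [(hσ t).1]⟩
  rw [cfDigit, cfIter_neg_inv_cfConj hσ hjk.le, ht, neg_inv_cfConj_succ, Int.floor_intCast_add,
    hfloor, add_zero, show k - 1 - j = t by omega]

end Conjugate

theorem inverse_period_alternating_sum_general (Δ a b : ℤ) (hΔ : 0 < Δ) (hsq : ¬ IsSquare Δ)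
    (ha : a ≠ 0)
    (ξ ξ' : ℝ) (hξ : ξ = ((b : ℝ) + Real.sqrt Δ) / (2 * a))
    (hξ' : ξ' = ((b : ℝ) - Real.sqrt Δ) / (2 * a))
    (hred1 : 1 < ξ) (hred2 : -1 < ξ') (hred3 : ξ' < 0)
    (m : ℕ)
    (hper : ∀ n, cfDigit ξ (n + 2 * m) = cfDigit ξ n) :
    (∀ n, cfDigit ((⌊ξ⌋ : ℝ) - ξ') (n + 2 * m) = cfDigit ((⌊ξ⌋ : ℝ) - ξ') n) ∧
    cfDigit ((⌊ξ⌋ : ℝ) - ξ') 0 = cfDigit ξ 0 ∧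
    (∀ i, 1 ≤ i → i < 2 * m → cfDigit ((⌊ξ⌋ : ℝ) - ξ') i = cfDigit ξ (2 * m - i)) ∧
    ∑ i ∈ Finset.range (2 * m), (-1 : ℤ) ^ i * cfDigit ξ i
      = ∑ i ∈ Finset.range (2 * m), (-1 : ℤ) ^ i * cfDigit ((⌊ξ⌋ : ℝ) - ξ') i := by
  have hs : Irrational √Δ := irrational_sqrt_intCast_iff.2 ⟨hsq, hΔ.le⟩
  have hsd : √Δ ^ 2 = ((Δ : ℚ) : ℝ) := by push_cast; exact Real.sq_sqrt (by exact_mod_cast hΔ.le)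
  have hpair : IsConjPair √Δ ξ ξ' :=
    ⟨b / (2 * a), 1 / (2 * a), by rw [hξ]; push_cast; ring, by rw [hξ']; push_cast; ring⟩
  have hξirr : Irrational ξ := by
    rw [hξ, show (2 * a : ℝ) = ((2 * a : ℤ) : ℝ) by push_cast; ring]
    exact (hs.intCast_add b).div_intCast (mul_ne_zero two_ne_zero ha)
  have hσ := cfConj_mem_Ioo (one_le_cfDigit hξirr hred1) ⟨hred2, hred3⟩
  have hconj_ret : cfConj ξ ξ' (2 * m) = ξ' := by
    have h := hpair.cfIter_cfConj hs hsd (2 * m)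
    rw [cfIter_eq_self_of_periodic hξirr hper] at h
    exact hpair.right_unique hs h |>.symm
  have hop : (⌊ξ⌋ : ℝ) - ξ' = -(cfConj ξ ξ' (2 * m + 1))⁻¹ := by
    rw [neg_inv_cfConj_succ, hconj_ret, ← zero_add (2 * m), hper 0]; rfl
  have hdig : ∀ i ≤ 2 * m, cfDigit ((⌊ξ⌋ : ℝ) - ξ') i = cfDigit ξ (2 * m - i) := fun i hi => by
    rw [hop, cfDigit_neg_inv_cfConj hσ (by omega : i < 2 * m + 1), Nat.add_sub_cancel]
  have hiter : cfIter ((⌊ξ⌋ : ℝ) - ξ') (2 * m) = (⌊ξ⌋ : ℝ) - ξ' := by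
    conv_lhs => rw [hop]
    rw [cfIter_neg_inv_cfConj hσ (by omega : 2 * m ≤ 2 * m + 1), Nat.add_sub_cancel_left,
      neg_inv_cfConj_succ, sub_eq_add_neg]
    rfl
  have hdig0 : cfDigit ξ (2 * m) = cfDigit ξ 0 := by simpa using hper 0
  refine ⟨cfDigit_add_of_cfIter_eq hiter, (hdig 0 (Nat.zero_le _)).trans hdig0,
    fun i _ hi => hdig i hi.le, ?_⟩
  rw [← alternating_sum_reflect _ (even_two_mul m) hdig0]
  exact Finset.sum_congr rfl fun i hi => by rw [hdig i (Finset.mem_range.1 hi).le]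

theorem inverse_period_alternating_sum (Δ a b c : ℤ) (hΔ : 0 < Δ) (hsq : ¬ IsSquare Δ)
    (ha : a ≠ 0) (hdisc : b ^ 2 - 4 * a * c = Δ)
    (hprim : Int.gcd (Int.gcd a b) c = 1)
    (ξ ξ' : ℝ) (hξ : ξ = ((b : ℝ) + Real.sqrt Δ) / (2 * a))
    (hξ' : ξ' = ((b : ℝ) - Real.sqrt Δ) / (2 * a))
    (hred1 : 1 < ξ) (hred2 : -1 < ξ') (hred3 : ξ' < 0)
    (m : ℕ) (hm : 0 < m)
    (hper : ∀ n, cfDigit ξ (n + 2 * m) = cfDigit ξ n)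
    (hminper : ∀ l : ℕ, 0 < l → (∀ n, cfDigit ξ (n + l) = cfDigit ξ n) → 2 * m ≤ l) :
    (∀ n, cfDigit ((⌊ξ⌋ : ℝ) - ξ') (n + 2 * m) = cfDigit ((⌊ξ⌋ : ℝ) - ξ') n) ∧
    cfDigit ((⌊ξ⌋ : ℝ) - ξ') 0 = cfDigit ξ 0 ∧
    (∀ i, 1 ≤ i → i < 2 * m → cfDigit ((⌊ξ⌋ : ℝ) - ξ') i = cfDigit ξ (2 * m - i)) ∧
    ∑ i ∈ Finset.range (2 * m), (-1 : ℤ) ^ i * cfDigit ξ i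
      = ∑ i ∈ Finset.range (2 * m), (-1 : ℤ) ^ i * cfDigit ((⌊ξ⌋ : ℝ) - ξ') i :=
  inverse_period_alternating_sum_general Δ a b hΔ hsq ha ξ ξ' hξ hξ' hred1 hred2 hred3 m hper
end
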